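/- Let $\lambda : A \times A \to (M, *)$ be a hermitian form, and let $(\lambda', \mu')$ be a quadratic form on an abelian group $A'$ with values in a quadratic group $(M'_e, M'_{ee}, h', p')$. Suppose $\alpha : A \to A'$ and $\beta_{ee} : M \to M'_{ee}$ are group homomorphisms such that $\beta_{ee}(m^*) = h'(p'(\beta_{ee}(m))) - \beta_{ee}(m)$ for all $m \in M$ and $\lambda'(\alpha(a_1), \alpha(a_2)) = \beta_{ee}(\lambda(a_1, a_2))$ for all $a_1, a_2 \in A$. Then there exists a unique group homomorphism $\beta_e : M \times_\lambda A \to M'_e$ such that $h' \circ \beta_e = \beta_{ee} \circ h_\lambda$, $\beta_e \circ p_\lambda = p' \circ \beta_{ee}$, and $\beta_e \circ \mu_\lambda = \mu' \circ \alpha$. -/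

import Mathlib

/-! Since `(m, a) = (m, 0) + (0, a)` in `M ×_lam A`, a homomorphism out of it is determined by its
values on `p_lam` and `mu_lam`, which gives uniqueness. For existence take
`(m, a) ↦ p' (bee m) + mu' (alpha a)`: the defect `p' (lam' (alpha a) (alpha a'))` of `mu'`
cancels the term `-lam a a'` of the group law, and being central it can be moved into place.
Compatibility with `h` is then exactly the two conditions on `bee`. -/

namespace CST

variable {A M : Type*} [AddCommGroup A] [AddCommGroup M]

/-- The underlying type of the central extension `M ×_lam A` determined by a
bilinear map `lam : A × A → M`. -/
def Ext (lam : A →+ A →+ M) : Type _ := M × A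

namespace Ext

variable (lam : A →+ A →+ M)

/-- The element of `M ×_lam A` given by the pair `(m, a)`. -/
def mkE (m : M) (a : A) : Ext lam := (m, a)

instance : Add (Ext lam) :=
  ⟨fun x y => (x.1 + y.1 - lam x.2 y.2, x.2 + y.2)⟩

instance : Zero (Ext lam) := ⟨((0 : M), (0 : A))⟩

instance : Neg (Ext lam) :=
  ⟨fun x => (-x.1 - lam x.2 x.2, -x.2)⟩

theorem add_def (x y : Ext lam) :
    x + y = (x.1 + y.1 - lam x.2 y.2, x.2 + y.2) := rfl

theorem zero_def : (0 : Ext lam) = ((0 : M), (0 : A)) := rfl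

theorem neg_def (x : Ext lam) : -x = (-x.1 - lam x.2 x.2, -x.2) := rfl

/-- The operation `(m, a) + (m', a') = (m + m' - lam a a', a + a')` makes
`M ×_lam A` into a group. -/
instance : AddGroup (Ext lam) :=
  AddGroup.ofLeftAxioms
    (by
      intro x y z
      show ((x.1 + y.1 - lam x.2 y.2) + z.1 - lam (x.2 + y.2) z.2, (x.2 + y.2) + z.2) =
        (x.1 + (y.1 + z.1 - lam y.2 z.2) - lam x.2 (y.2 + z.2), x.2 + (y.2 + z.2))
      refine Prod.ext ?_ ?_ <;> dsimp only <;> (try simp) <;> (try abel))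
    (by
      intro x
      show ((0 : M) + x.1 - lam 0 x.2, (0 : A) + x.2) = x
      refine Prod.ext ?_ ?_ <;> dsimp only <;> simp)
    (by
      intro x
      show ((-x.1 - lam x.2 x.2) + x.1 - lam (-x.2) x.2, -x.2 + x.2) = ((0 : M), (0 : A))
      refine Prod.ext ?_ ?_ <;> dsimp only <;> (try simp) <;> (try abel))

/-- The function `h_lam (m, a) = m + m^* + lam a a`. -/
def hfun (star : M →+ M) : Ext lam → M :=
  fun x => x.1 + star x.1 + lam x.2 x.2

/-- The function `p_lam m = (m, 0)`. -/
def pfun : M → Ext lam := fun m => mkE lam m 0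

/-- The function `mu_lam a = (0, a)`. -/
def mufun : A → Ext lam := fun a => mkE lam 0 a

/-- The set of relations `(m^*, -a) - (m, a)` in `M ×_lam A`. -/
def relSet (star : M →+ M) : Set (Ext lam) :=
  {x | ∃ (m : M) (a : A), x = mkE lam (star m) (-a) - mkE lam m a}

end Ext

open Ext

theorem map_zero_of_add_eq_add_add {G : Type*} [AddGroup G] (lam : A →+ A →+ M) (f : M →+ G)
    {g : A → G} (hg : ∀ a a', g (a + a') = g a + g a' + f (lam a a')) : g 0 = 0 := by
  simpa using hg 0 0

namespace Ext

variable (lam : A →+ A →+ M) {G : Type*} [AddGroup G]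

theorem mkE_eq_add (m : M) (a : A) : mkE lam m a = mkE lam m 0 + mkE lam 0 a := by
  change (m, a) = (m + 0 - lam 0 a, 0 + a)
  simp

theorem hom_ext {φ ψ : Ext lam →+ G} (h₁ : ∀ m, φ (mkE lam m 0) = ψ (mkE lam m 0))
    (h₂ : ∀ a, φ (mkE lam 0 a) = ψ (mkE lam 0 a)) : φ = ψ := by
  ext ⟨m, a⟩
  change φ (mkE lam m a) = ψ (mkE lam m a)
  rw [mkE_eq_add, map_add, map_add, h₁, h₂]

section lift

variable (f : M →+ G) (hf : ∀ m y, f m + y = y + f m) (g : A → G)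
  (hg : ∀ a a', g (a + a') = g a + g a' + f (lam a a'))

def lift : Ext lam →+ G where
  toFun x := f x.1 + g x.2
  map_zero' := by simp [zero_def, map_zero_of_add_eq_add_add lam f hg]
  map_add' := by
    rintro ⟨m, a⟩ ⟨m', a'⟩
    change f (m + m' - lam a a') + g (a + a') = f m + g a + (f m' + g a')
    rw [hg, ← hf, map_sub, map_add, sub_eq_add_neg, add_assoc (f m + f m'), neg_add_cancel_left,
      add_assoc, ← add_assoc (f m'), hf m', add_assoc, ← add_assoc]

theorem lift_mkE (m : M) (a : A) : lift lam f hf g hg (mkE lam m a) = f m + g a := rfl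

end lift

end Ext

theorem universal_quadratic_refinement_general
    {A' Me' Mee' : Type*} [AddCommGroup A'] [AddGroup Me'] [AddCommGroup Mee']
    (lam : A →+ A →+ M) (star : M →+ M)
    (h' : Me' →+ Mee') (p' : Mee' →+ Me')
    (p'_central : ∀ (x : Mee') (y : Me'), p' x + y = y + p' x)
    (lam' : A' →+ A' →+ Mee') (mu' : A' → Me')
    (mu'_add : ∀ a a' : A', mu' (a + a') = mu' a + mu' a' + p' (lam' a a'))
    (h'_mu' : ∀ a : A', h' (mu' a) = lam' a a)
    (alpha : A →+ A') (bee : M →+ Mee')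
    (bee_star : ∀ m : M, bee (star m) = h' (p' (bee m)) - bee m)
    (bee_lam : ∀ a1 a2 : A, lam' (alpha a1) (alpha a2) = bee (lam a1 a2)) :
    ∃! be : Ext lam →+ Me',
      (∀ (m : M) (a : A), h' (be (mkE lam m a)) = bee (m + star m + lam a a)) ∧
      (∀ m : M, be (mkE lam m 0) = p' (bee m)) ∧
      (∀ a : A, be (mkE lam 0 a) = mu' (alpha a)) := by
  have mu'_alpha_add (a a' : A) :
      mu' (alpha (a + a')) = mu' (alpha a) + mu' (alpha a') + p'.comp bee (lam a a') := by
    simp [mu'_add, bee_lam]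
  have mu'_zero : mu' 0 = 0 := map_zero_of_add_eq_add_add lam' p' mu'_add
  refine ⟨lift lam (p'.comp bee) (fun m => p'_central (bee m)) (mu' ∘ alpha) mu'_alpha_add,
    ⟨fun m a => ?_, fun m => ?_, fun a => ?_⟩, ?_⟩
  · simp only [lift_mkE, AddMonoidHom.comp_apply, Function.comp_apply, map_add, h'_mu', bee_lam,
      bee_star]
    abel
  · simp [lift_mkE, mu'_zero]
  · simp [lift_mkE]
  · rintro be ⟨-, hp, hmu⟩
    exact hom_ext lam (fun m => by simp [hp, lift_mkE, mu'_zero]) (fun a => by simp [hmu, lift_mkE])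

/-- Universal property of the quadratic refinement
`(lam, mu_lam) : A → (M ×_lam A, M, h_lam, p_lam)` among quadratic forms. -/
theorem universal_quadratic_refinement
    {A' Me' Mee' : Type*} [AddCommGroup A'] [AddGroup Me'] [AddCommGroup Mee']
    (lam : A →+ A →+ M) (star : M →+ M)
    (star_star : ∀ m : M, star (star m) = m)
    (herm : ∀ a a' : A, lam a' a = star (lam a a'))
    (h' : Me' →+ Mee') (p' : Mee' →+ Me')
    (p'_central : ∀ (x : Mee') (y : Me'), p' x + y = y + p' x)
    (hph' : ∀ x : Me', h' (p' (h' x)) = 2 • h' x)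
    (lam' : A' →+ A' →+ Mee') (mu' : A' → Me')
    (mu'_add : ∀ a a' : A', mu' (a + a') = mu' a + mu' a' + p' (lam' a a'))
    (h'_mu' : ∀ a : A', h' (mu' a) = lam' a a)
    (alpha : A →+ A') (bee : M →+ Mee')
    (bee_star : ∀ m : M, bee (star m) = h' (p' (bee m)) - bee m)
    (bee_lam : ∀ a1 a2 : A, lam' (alpha a1) (alpha a2) = bee (lam a1 a2)) :
    ∃! be : Ext lam →+ Me',
      (∀ (m : M) (a : A), h' (be (mkE lam m a)) = bee (m + star m + lam a a)) ∧
      (∀ m : M, be (mkE lam m 0) = p' (bee m)) ∧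
      (∀ a : A, be (mkE lam 0 a) = mu' (alpha a)) :=
  universal_quadratic_refinement_general lam star h' p' p'_central lam' mu' mu'_add h'_mu' alpha bee
    bee_star bee_lam

end CST
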